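/- arXiv:1811.02236 — 3 statements merged into one kernel-verified Lean document; each statement's English description precedes it below -/
import Mathlib

section
/- If μ is a finite Borel measure on ℝ² that charges no line and f is a spherical transform whose domain of definition contains supp μ, then ℓ_μ = ℓ_ν where ν = μ ∘ f⁻¹ is the pushforward of μ under f; that is, p(ω,μ) = p(ω,ν) for every order type ω. -/
open MeasureTheory Filter Topology
open scoped ENNReal NNReal

noncomputable section

/-- Points of the plane. -/
abbrev Pt : Type := ℝ × ℝ

/-- The orientation of a triple of points: the sign of `det (q - p, r - p)`. -/
noncomputable def chi (p q r : Pt) : ℝ :=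
  Real.sign ((q.1 - p.1) * (r.2 - p.2) - (q.2 - p.2) * (r.1 - p.1))

/-- A tuple of points is in general position: pairwise distinct and no aligned triple. -/
def InGenPos {n : ℕ} (P : Fin n → Pt) : Prop :=
  Function.Injective P ∧
    ∀ i j k : Fin n, i ≠ j → j ≠ k → i ≠ k → chi (P i) (P j) (P k) ≠ 0

/-- Two tuples of points have the same order type: some relabelling preserves all
orientations. -/
def sameOT {n : ℕ} (P Q : Fin n → Pt) : Prop :=
  ∃ σ : Equiv.Perm (Fin n),
    ∀ i j k : Fin n, chi (P i) (P j) (P k) = chi (Q (σ i)) (Q (σ j)) (Q (σ k))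

/-- `sameOT` as a setoid on configurations in general position. -/
def OTSetoid (n : ℕ) : Setoid {P : Fin n → Pt // InGenPos P} where
  r P Q := sameOT P.1 Q.1
  iseqv := by
    constructor
    · intro P; exact ⟨Equiv.refl _, fun i j k => rfl⟩
    · rintro P Q ⟨σ, h⟩
      refine ⟨σ.symm, fun i j k => ?_⟩
      have := (h (σ.symm i) (σ.symm j) (σ.symm k)).symm
      simpa using this
    · rintro P Q R ⟨σ, h⟩ ⟨τ, h'⟩
      exact ⟨σ.trans τ, fun i j k => (h i j k).trans (h' (σ i) (σ j) (σ k))⟩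

/-- Order types of size `n`. -/
abbrev PtOrderType (n : ℕ) : Type := Quotient (OTSetoid n)

/-- The set of all order types. -/
abbrev OT : Type := (n : ℕ) × PtOrderType n

/-- A canonical realization of an order type. -/
noncomputable def realization {n : ℕ} (ω : PtOrderType n) : Fin n → Pt :=
  (Quotient.out ω).1

/-- `P` is a point configuration realizing the order type `ω`. -/
def RealizesOT {n : ℕ} (P : Fin n → Pt) (ω : PtOrderType n) : Prop :=
  ∃ h : InGenPos P, Quotient.mk (OTSetoid n) ⟨P, h⟩ = ω

/-- The density `p(ω, ω')` of an order type `ω` in an order type `ω'`: the probability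
that `|ω|` points chosen uniformly at random from a realization of `ω'` have order
type `ω`. -/
noncomputable def density {k n : ℕ} (ω : PtOrderType k) (ω' : PtOrderType n) : ℝ :=
  (Nat.card {s : Fin k ↪ Fin n // sameOT (realization ω) (fun i => realization ω' (s i))} : ℝ) /
    (Nat.card (Fin k ↪ Fin n) : ℝ)

/-- Density, seen on the set of all order types. -/
noncomputable def densityOT (ω ω' : OT) : ℝ := density ω.2 ω'.2

/-- `ℓ : OT → ℝ` is a limit of order types: there is a sequence of order types whose
sizes tend to infinity and whose densities converge pointwise to `ℓ`. -/
def IsOTLimit (ℓ : OT → ℝ) : Prop :=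
  ∃ ωs : ℕ → OT,
    Tendsto (fun n => (ωs n).1) atTop atTop ∧
    ∀ ω : OT, Tendsto (fun n => densityOT ω (ωs n)) atTop (nhds (ℓ ω))

/-- Normalization of a measure to a (sub)probability measure `μ / μ(ℝ²)`. -/
noncomputable def mnormalize (μ : Measure Pt) : Measure Pt :=
  ((μ Set.univ)⁻¹).toNNReal • μ

instance mnormalize.isFiniteMeasure (μ : Measure Pt) : IsFiniteMeasure (mnormalize μ) := by
  constructor
  simp only [mnormalize, Measure.smul_apply, smul_eq_mul, ENNReal.smul_def]
  rcases eq_or_ne (μ Set.univ) 0 with h | h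
  · simp [h]
  rcases eq_or_ne (μ Set.univ) ⊤ with h' | h'
  · simp [h']
  · rw [ENNReal.coe_toNNReal (ENNReal.inv_ne_top.mpr h), ENNReal.inv_mul_cancel h h']
    exact ENNReal.one_lt_top

/-- The set of configurations realizing a given order type. -/
def OTSet {n : ℕ} (ω : PtOrderType n) : Set (Fin n → Pt) :=
  {P | RealizesOT P ω}

/-- `ℓ_μ(ω)`: the probability that `|ω|` points sampled independently from `μ / μ(ℝ²)`
are in general position and have order type `ω`. -/
noncomputable def ellMu {n : ℕ} (ω : PtOrderType n) (μ : Measure Pt) : ℝ :=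
  ((Measure.pi fun _ : Fin n => mnormalize μ) (OTSet ω)).toReal

/-- Affine lines of the plane. -/
def IsAffineLine (L : Set Pt) : Prop :=
  ∃ p v : Pt, v ≠ 0 ∧ L = {x | ∃ t : ℝ, x = p + t • v}

/-- A measure charges no line. -/
def ChargesNoLine (μ : Measure Pt) : Prop :=
  ∀ L : Set Pt, IsAffineLine L → μ L = 0

/-- The (topological) support of a measure on the plane. -/
def msupport (μ : Measure Pt) : Set Pt :=
  {x | ∀ U : Set Pt, IsOpen U → x ∈ U → 0 < μ U}

/-- A set of points is in convex position: in general position, and every point is an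
extreme point of the convex hull. -/
def ConvexPosSet (S : Set Pt) : Prop :=
  (∀ p q r : Pt, p ∈ S → q ∈ S → r ∈ S → p ≠ q → q ≠ r → p ≠ r → chi p q r ≠ 0) ∧
    ∀ p ∈ S, p ∈ Set.extremePoints ℝ (convexHull ℝ S)


/-- The standard identification of the plane with the open upper hemisphere. -/
noncomputable def iota (p : Pt) : Fin 3 → ℝ :=
  (Real.sqrt (p.1 ^ 2 + p.2 ^ 2 + 1))⁻¹ • ![p.1, p.2, 1]

/-- The inverse identification, from the open upper hemisphere back to the plane. -/
noncomputable def invIota (u : Fin 3 → ℝ) : Pt := (u 0 / u 2, u 1 / u 2)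

/-- The affine map on the plane with linear part `A` and translation part `c`. -/
noncomputable def affApply (A : Matrix (Fin 2) (Fin 2) ℝ) (c : Pt) (p : Pt) : Pt :=
  (A 0 0 * p.1 + A 0 1 * p.2 + c.1, A 1 0 * p.1 + A 1 1 * p.2 + c.2)

/-- `f` is a spherical transform defined (at least) on `X`: on `X` it agrees with
`g ∘ ι⁻¹ ∘ h ∘ ι` for a direct affine transform `g` and a rotation `h ∈ SO(3)` that
keeps the image of `ι(X)` in the open upper hemisphere. -/
def IsSphericalTransformOn (f : Pt → Pt) (X : Set Pt) : Prop :=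
  ∃ (A : Matrix (Fin 2) (Fin 2) ℝ) (c : Pt) (h : Matrix (Fin 3) (Fin 3) ℝ),
    0 < A.det ∧ h.transpose * h = 1 ∧ h.det = 1 ∧
    (∀ p ∈ X, 0 < h.mulVec (iota p) 2) ∧
    ∀ p ∈ X, f p = affApply A c (invIota (h.mulVec (iota p)))


/-!
A spherical transform `g ∘ ι⁻¹ ∘ h ∘ ι` is a projective map of positive determinant, so on its
domain it is injective and preserves the orientation of every triple: `χ(p, q, r)` is the sign of
`det (ι p, ι q, ι r)`, the rotation multiplies this determinant by `det h = 1`, dehomogenizing by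
positive third coordinates divides it by a positive number, and the affine part multiplies
`χ`'s determinant by `det A > 0`. Hence a tuple of points of `supp μ` realizes `ω` iff its image
does. As `supp μ` has full measure, the events "`P` realizes `ω`" and "`f ∘ P` realizes `ω`"
coincide almost surely, and the probability of the latter is `ℓ_{f_* μ}(ω)`.
-/

open Matrix

def orientDet (p q r : Pt) : ℝ := (q.1 - p.1) * (r.2 - p.2) - (q.2 - p.2) * (r.1 - p.1)

lemma chi_eq_sign_orientDet (p q r : Pt) : chi p q r = Real.sign (orientDet p q r) := rfl

lemma Real.sign_mul_of_pos {c : ℝ} (hc : 0 < c) (x : ℝ) : Real.sign (c * x) = Real.sign x := by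
  rcases lt_trichotomy x 0 with hx | rfl | hx
  · rw [Real.sign_of_neg hx, Real.sign_of_neg (mul_neg_of_pos_of_neg hc hx)]
  · rw [mul_zero]
  · rw [Real.sign_of_pos hx, Real.sign_of_pos (mul_pos hc hx)]

lemma Real.sign_monotone : Monotone Real.sign := by
  intro a b hab
  simp only [Real.sign]
  split_ifs <;> linarith

lemma orientDet_affApply (A : Matrix (Fin 2) (Fin 2) ℝ) (c p q r : Pt) :
    orientDet (affApply A c p) (affApply A c q) (affApply A c r) = A.det * orientDet p q r := by
  simp only [orientDet, affApply, Matrix.det_fin_two]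
  ring

lemma chi_affApply {A : Matrix (Fin 2) (Fin 2) ℝ} (hA : 0 < A.det) (c p q r : Pt) :
    chi (affApply A c p) (affApply A c q) (affApply A c r) = chi p q r := by
  rw [chi_eq_sign_orientDet, orientDet_affApply, Real.sign_mul_of_pos hA, chi_eq_sign_orientDet]

lemma orientDet_invIota {u v w : Fin 3 → ℝ} (hu : u 2 ≠ 0) (hv : v 2 ≠ 0) (hw : w 2 ≠ 0) :
    orientDet (invIota u) (invIota v) (invIota w) =
      (u 2 * v 2 * w 2)⁻¹ * (Matrix.of ![u, v, w]).det := by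
  simp only [orientDet, invIota, Matrix.det_fin_three, Matrix.of_apply, Matrix.cons_val_zero,
    Matrix.cons_val_one, Matrix.cons_val_two, Matrix.head_cons, Matrix.tail_cons]
  field_simp
  ring

lemma det_of_mulVec (h : Matrix (Fin 3) (Fin 3) ℝ) (u v w : Fin 3 → ℝ) :
    (Matrix.of ![h *ᵥ u, h *ᵥ v, h *ᵥ w]).det = h.det * (Matrix.of ![u, v, w]).det := by
  have : Matrix.of ![h *ᵥ u, h *ᵥ v, h *ᵥ w] = Matrix.of ![u, v, w] * h.transpose := by
    ext i j
    fin_cases i <;> simp [Matrix.mul_apply, Matrix.mulVec, dotProduct, mul_comm]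
  rw [this, Matrix.det_mul, Matrix.det_transpose, mul_comm]

lemma det_of_iota (p q r : Pt) :
    (Matrix.of ![iota p, iota q, iota r]).det =
      ((√(p.1 ^ 2 + p.2 ^ 2 + 1))⁻¹ * (√(q.1 ^ 2 + q.2 ^ 2 + 1))⁻¹ *
        (√(r.1 ^ 2 + r.2 ^ 2 + 1))⁻¹) * orientDet p q r := by
  simp only [iota, orientDet, Matrix.det_fin_three, Matrix.of_apply, Pi.smul_apply, smul_eq_mul,
    Matrix.cons_val_zero, Matrix.cons_val_one, Matrix.cons_val_two, Matrix.head_cons,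
    Matrix.tail_cons]
  ring

lemma chi_invIota {u v w : Fin 3 → ℝ} (hu : 0 < u 2) (hv : 0 < v 2) (hw : 0 < w 2) :
    chi (invIota u) (invIota v) (invIota w) = Real.sign (Matrix.of ![u, v, w]).det := by
  rw [chi_eq_sign_orientDet, orientDet_invIota hu.ne' hv.ne' hw.ne', Real.sign_mul_of_pos]
  positivity

lemma sign_det_of_iota (p q r : Pt) :
    Real.sign (Matrix.of ![iota p, iota q, iota r]).det = chi p q r := by
  rw [det_of_iota, Real.sign_mul_of_pos, chi_eq_sign_orientDet]
  positivity

lemma invIota_smul {t : ℝ} (ht : t ≠ 0) (u : Fin 3 → ℝ) : invIota (t • u) = invIota u := by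
  simp only [invIota, Pi.smul_apply, smul_eq_mul, mul_div_mul_left _ _ ht]

lemma eq_smul_of_invIota_eq {u v : Fin 3 → ℝ} (hu : u 2 ≠ 0) (hv : v 2 ≠ 0)
    (huv : invIota u = invIota v) : u = (u 2 / v 2) • v := by
  obtain ⟨h0, h1⟩ := Prod.ext_iff.1 huv
  rw [invIota, invIota, div_eq_div_iff hu hv] at h0 h1
  have key : ∀ i, u i * v 2 = u 2 * v i := by
    intro i
    fin_cases i
    · exact h0.trans (mul_comm _ _)
    · exact h1.trans (mul_comm _ _)
    · rfl
  ext i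
  rw [Pi.smul_apply, smul_eq_mul, div_mul_eq_mul_div, eq_div_iff hv, key]

lemma invIota_iota (p : Pt) : invIota (iota p) = p := by
  have hs : √(p.1 ^ 2 + p.2 ^ 2 + 1) ≠ 0 := (Real.sqrt_pos.2 (by positivity)).ne'
  simp only [invIota, iota, Pi.smul_apply, smul_eq_mul, Matrix.cons_val_zero,
    Matrix.cons_val_one, Matrix.cons_val_two, Matrix.head_cons, Matrix.tail_cons, mul_one]
  field_simp

lemma affApply_injective {A : Matrix (Fin 2) (Fin 2) ℝ} (hA : A.det ≠ 0) (c : Pt) :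
    Function.Injective (affApply A c) := by
  intro x y hxy
  obtain ⟨h1, h2⟩ := Prod.ext_iff.1 hxy
  simp only [affApply] at h1 h2
  rw [Matrix.det_fin_two] at hA
  have e1 : (A 0 0 * A 1 1 - A 0 1 * A 1 0) * (x.1 - y.1) = 0 := by
    linear_combination A 1 1 * h1 - A 0 1 * h2
  have e2 : (A 0 0 * A 1 1 - A 0 1 * A 1 0) * (x.2 - y.2) = 0 := by
    linear_combination A 0 0 * h2 - A 1 0 * h1
  exact Prod.ext (sub_eq_zero.1 ((mul_eq_zero.1 e1).resolve_left hA))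
    (sub_eq_zero.1 ((mul_eq_zero.1 e2).resolve_left hA))

lemma injOn_invIota_mulVec_iota {h : Matrix (Fin 3) (Fin 3) ℝ} (hh : h.det ≠ 0) :
    {p | (h *ᵥ iota p) 2 ≠ 0}.InjOn fun p => invIota (h *ᵥ iota p) := by
  intro p hp q hq hpq
  have hscale := eq_smul_of_invIota_eq hp hq hpq
  rw [← Matrix.mulVec_smul] at hscale
  have hpq' := congrArg invIota (Matrix.mulVec_injective_of_det_ne_zero hh hscale)
  rwa [invIota_smul (div_ne_zero hp hq), invIota_iota, invIota_iota] at hpq'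

namespace IsSphericalTransformOn

variable {f : Pt → Pt} {X : Set Pt}

lemma injOn (hf : IsSphericalTransformOn f X) : X.InjOn f := by
  obtain ⟨A, c, h, hA, -, hdet, hpos, hfX⟩ := hf
  intro p hp q hq hpq
  rw [hfX p hp, hfX q hq] at hpq
  exact injOn_invIota_mulVec_iota (hdet ▸ one_ne_zero) (hpos p hp).ne' (hpos q hq).ne'
    (affApply_injective hA.ne' c hpq)

lemma chi_eq (hf : IsSphericalTransformOn f X) {p q r : Pt} (hp : p ∈ X) (hq : q ∈ X)
    (hr : r ∈ X) : chi (f p) (f q) (f r) = chi p q r := by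
  obtain ⟨A, c, h, hA, -, hdet, hpos, hfX⟩ := hf
  rw [hfX p hp, hfX q hq, hfX r hr, chi_affApply hA,
    chi_invIota (hpos p hp) (hpos q hq) (hpos r hr), det_of_mulVec, hdet, one_mul,
    sign_det_of_iota]

end IsSphericalTransformOn

lemma realizesOT_iff {n : ℕ} (P : Fin n → Pt) (ω : PtOrderType n) :
    RealizesOT P ω ↔ InGenPos P ∧ sameOT P (realization ω) :=
  ⟨fun ⟨h, e⟩ => ⟨h, Quotient.mk_eq_iff_out.1 e⟩, fun ⟨h, e⟩ => ⟨h, Quotient.mk_eq_iff_out.2 e⟩⟩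

lemma realizesOT_comp_iff {f : Pt → Pt} {X : Set Pt} (hinj : X.InjOn f)
    (hchi : ∀ p ∈ X, ∀ q ∈ X, ∀ r ∈ X, chi (f p) (f q) (f r) = chi p q r)
    {n : ℕ} {P : Fin n → Pt} (hP : ∀ i, P i ∈ X) (ω : PtOrderType n) :
    RealizesOT (f ∘ P) ω ↔ RealizesOT P ω := by
  have hinjP : Function.Injective (f ∘ P) ↔ Function.Injective P :=
    ⟨Function.Injective.of_comp, fun hP' _ _ hij => hP' (hinj (hP _) (hP _) hij)⟩
  have hchiP : ∀ i j k, chi (f (P i)) (f (P j)) (f (P k)) = chi (P i) (P j) (P k) :=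
    fun i j k => hchi _ (hP i) _ (hP j) _ (hP k)
  simp only [realizesOT_iff, InGenPos, sameOT, hinjP, Function.comp_apply, hchiP]

@[fun_prop]
lemma measurable_chi {n : ℕ} (i j k : Fin n) :
    Measurable fun P : Fin n → Pt => chi (P i) (P j) (P k) :=
  Real.sign_monotone.measurable.comp (by fun_prop)

lemma measurableSet_OTSet {n : ℕ} (ω : PtOrderType n) : MeasurableSet (OTSet ω) := by
  simp only [OTSet, realizesOT_iff, measurableSet_setOfPred, InGenPos, sameOT,
    Function.Injective]
  fun_prop

lemma msupport_eq_support (μ : Measure Pt) : msupport μ = μ.support := by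
  ext x
  simp only [msupport, Measure.support_eq_forall_isOpen, Set.mem_ofPred_eq]
  exact forall_congr' fun U => ⟨fun h hx hU => h hU hx, fun h hU hx => h hx hU⟩

lemma ae_mem_msupport_mnormalize (μ : Measure Pt) : ∀ᵐ x ∂mnormalize μ, x ∈ msupport μ := by
  rw [msupport_eq_support]
  exact Measure.smul_absolutelyContinuous.ae_le Measure.support_mem_ae

lemma mnormalize_map (μ : Measure Pt) {f : Pt → Pt} (hf : Measurable f) :
    mnormalize (μ.map f) = (mnormalize μ).map f := by
  rw [mnormalize, mnormalize, Measure.map_apply hf MeasurableSet.univ, Set.preimage_univ,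
    Measure.map_smul]

lemma ellMu_map_of_ae {μ : Measure Pt} {f : Pt → Pt} (hf : Measurable f) {n : ℕ}
    (ω : PtOrderType n)
    (h : ∀ᵐ P ∂Measure.pi fun _ : Fin n => mnormalize μ, RealizesOT (f ∘ P) ω ↔ RealizesOT P ω) :
    ellMu ω (μ.map f) = ellMu ω μ := by
  have hF : MeasurePreserving (fun (P : Fin n → Pt) i => f (P i))
      (Measure.pi fun _ => mnormalize μ) (Measure.pi fun _ => mnormalize (μ.map f)) := by
    rw [mnormalize_map μ hf]
    exact measurePreserving_pi _ _ fun _ => hf.measurePreserving _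
  rw [ellMu, ellMu, ← hF.measure_preimage (measurableSet_OTSet ω).nullMeasurableSet]
  exact congrArg ENNReal.toReal (measure_congr (h.mono fun P hP => propext hP))

theorem stmt_6_general (μ : Measure Pt) (f : Pt → Pt) (hf : Measurable f)
    (hsph : IsSphericalTransformOn f (msupport μ)) :
    ∀ (n : ℕ) (ω : PtOrderType n), ellMu ω μ = ellMu ω (Measure.map f μ) := by
  intro n ω
  have hsupp : ∀ᵐ P ∂Measure.pi fun _ : Fin n => mnormalize μ, ∀ i, P i ∈ msupport μ :=
    ae_all_iff.2 fun i =>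
      (Measure.quasiMeasurePreserving_eval _ i).ae (ae_mem_msupport_mnormalize μ)
  refine (ellMu_map_of_ae hf ω (hsupp.mono fun P hP => ?_)).symm
  exact realizesOT_comp_iff hsph.injOn (fun p hp q hq r hr => hsph.chi_eq hp hq hr) hP ω

theorem stmt_6 (μ : Measure Pt) [IsFiniteMeasure μ] (hpos : 0 < μ Set.univ)
    (hline : ChargesNoLine μ) (f : Pt → Pt) (hf : Measurable f)
    (hsph : IsSphericalTransformOn f (msupport μ)) :
    ∀ (n : ℕ) (ω : PtOrderType n), ellMu ω μ = ellMu ω (Measure.map f μ) :=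
  stmt_6_general μ f hf hsph

end
end

section
/- Let μ be a finite Borel measure on ℝ² whose support has non-empty interior. Then for any two distinct points a, b ∈ supp μ, the set {(y,z) ∈ ℝ² × ℝ² : χ(a,y,z) ≠ χ(b,y,z)} has positive μ⊗μ-measure; in other words, the kernel (supp μ, μ, χ) is twin-free. -/
open MeasureTheory Filter Topology
open scoped ENNReal NNReal

noncomputable section

/-! Given `y` off the line `ab`, move it a little towards the midpoint of `a` and `b` to get `z`.
Then `a` and `b` lie on opposite sides of the line `yz`, so `χ(a,y,z) = -χ(b,y,z) ≠ 0`, and this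
persists on an open neighbourhood of `(y, z)`. Taking `y` and `z` in the interior of the support,
that neighbourhood has positive `μ ⊗ μ`-measure. -/

def orient (p q r : Pt) : ℝ :=
  (q.1 - p.1) * (r.2 - p.2) - (q.2 - p.2) * (r.1 - p.1)

lemma chi_eq_sign_orient (p q r : Pt) : chi p q r = Real.sign (orient p q r) := rfl

lemma continuous_orient (p : Pt) : Continuous fun x : Pt × Pt => orient p x.1 x.2 := by
  unfold orient; fun_prop

lemma chi_ne_of_orient_mul_neg {a b q r : Pt} (h : orient a q r * orient b q r < 0) :
    chi a q r ≠ chi b q r := by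
  rw [chi_eq_sign_orient, chi_eq_sign_orient]
  rcases mul_neg_iff.1 h with ⟨ha, hb⟩ | ⟨ha, hb⟩
  · rw [Real.sign_of_pos ha, Real.sign_of_neg hb]; norm_num
  · rw [Real.sign_of_neg ha, Real.sign_of_pos hb]; norm_num

lemma orient_mul_orient_toward_midpoint (a b y : Pt) (t : ℝ) :
    let z := y + t • ((2⁻¹ : ℝ) • (a + b) - y)
    orient a y z * orient b y z = -(t * orient a y b / 2) ^ 2 := by
  simp only [orient, Prod.fst_add, Prod.snd_add, Prod.fst_sub, Prod.snd_sub, Prod.smul_fst,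
    Prod.smul_snd, smul_eq_mul]
  ring

lemma orient_add_smul_normal (a b c : Pt) (s : ℝ) :
    orient a (c + s • (-(b.2 - a.2), b.1 - a.1)) b =
      orient a c b - s * ((b.1 - a.1) ^ 2 + (b.2 - a.2) ^ 2) := by
  simp only [orient, Prod.fst_add, Prod.snd_add, Prod.smul_fst, Prod.smul_snd, smul_eq_mul]
  ring

lemma exists_ne_zero_add_smul_mem {E : Type*} [AddCommGroup E] [Module ℝ E] [TopologicalSpace E]
    [ContinuousAdd E] [ContinuousSMul ℝ E] {U : Set E} (hU : IsOpen U) {c : E} (hc : c ∈ U)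
    (v : E) : ∃ t ≠ (0 : ℝ), c + t • v ∈ U := by
  have hlim : Tendsto (fun t : ℝ => c + t • v) (𝓝[≠] 0) (𝓝 c) := by
    have : Continuous fun t : ℝ => c + t • v := by fun_prop
    simpa using (this.tendsto 0).mono_left nhdsWithin_le_nhds
  exact ((hlim.eventually (hU.mem_nhds hc)).and self_mem_nhdsWithin).exists.imp
    fun t ht => ⟨ht.2, ht.1⟩

lemma exists_mem_orient_ne_zero {U : Set Pt} (hU : IsOpen U) {c : Pt} (hc : c ∈ U) {a b : Pt}
    (hab : a ≠ b) : ∃ y ∈ U, orient a y b ≠ 0 := by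
  by_cases hcab : orient a c b = 0
  · obtain ⟨s, hs, hsU⟩ := exists_ne_zero_add_smul_mem hU hc (-(b.2 - a.2), b.1 - a.1)
    refine ⟨_, hsU, ?_⟩
    have hK : (b.1 - a.1) ^ 2 + (b.2 - a.2) ^ 2 ≠ 0 := by
      contrapose! hab
      ext <;> nlinarith [sq_nonneg (b.1 - a.1), sq_nonneg (b.2 - a.2)]
    rw [orient_add_smul_normal, hcab, zero_sub, neg_ne_zero]
    exact mul_ne_zero hs hK
  · exact ⟨c, hc, hcab⟩

lemma measure_prod_pos_of_isOpen {μ ν : Measure Pt} [SFinite ν] {W : Set (Pt × Pt)}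
    (hW : IsOpen W) {p : Pt × Pt} (hp : p ∈ W) (h₁ : p.1 ∈ msupport μ)
    (h₂ : p.2 ∈ msupport ν) : 0 < μ.prod ν W := by
  obtain ⟨u, v, hu, hv, hpu, hpv, huv⟩ := isOpen_prod_iff.1 hW p.1 p.2 hp
  calc 0 < μ u * ν v := ENNReal.mul_pos (h₁ u hu hpu).ne' (h₂ v hv hpv).ne'
    _ = μ.prod ν (u ×ˢ v) := (Measure.prod_prod u v).symm
    _ ≤ μ.prod ν W := measure_mono huv

theorem stmt_12 (μ : Measure Pt) [IsFiniteMeasure μ]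
    (hi : (interior (msupport μ)).Nonempty) :
    ∀ a ∈ msupport μ, ∀ b ∈ msupport μ, a ≠ b →
      0 < (μ.prod μ) {p : Pt × Pt | chi a p.1 p.2 ≠ chi b p.1 p.2} := by
  intro a _ b _ hab
  obtain ⟨c, hc⟩ := hi
  obtain ⟨y, hy, hyab⟩ := exists_mem_orient_ne_zero isOpen_interior hc hab
  obtain ⟨t, ht, hz⟩ :=
    exists_ne_zero_add_smul_mem isOpen_interior hy ((2⁻¹ : ℝ) • (a + b) - y)
  set W := {p : Pt × Pt | orient a p.1 p.2 * orient b p.1 p.2 < 0}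
  have hW : IsOpen W :=
    isOpen_lt ((continuous_orient a).mul (continuous_orient b)) continuous_const
  have hyz : (y, y + t • ((2⁻¹ : ℝ) • (a + b) - y)) ∈ W := by
    rw [Set.mem_ofPred_eq, orient_mul_orient_toward_midpoint, neg_neg_iff_pos]
    positivity
  calc 0 < μ.prod μ W :=
        measure_prod_pos_of_isOpen hW hyz (interior_subset hy) (interior_subset hz)
    _ ≤ _ := measure_mono fun p hp => chi_ne_of_orient_mul_neg hp

end
end

section
/- Let k ≥ 4 and let N ≥ k be an integer such that every set of N points in general position in ℝ² contains k points in convex position. Then every limit of order types ℓ satisfies ℓ(◇_k) ≥ 1/C(N,k). -/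
open MeasureTheory Filter Topology
open scoped ENNReal NNReal

noncomputable section

/-
Any two configurations of `k` points in convex position have the same order type: sort the
points by angle around the lowest one, and every increasing triple is counterclockwise, since
otherwise its middle point would lie in the triangle spanned by the other two and the lowest
point. Hence `p(◇_k, ω')` is at least the fraction of `k`-subsets of a realization of `ω'` that
are in convex position. Every `N`-subset contains such a `k`-subset, and a `k`-subset lies in
`C(n - k, N - k)` of the `N`-subsets, so double counting shows that at least
`C(n, k) / C(N, k)` of the `k`-subsets are in convex position, whatever `ω'` with `n ≥ N`
points. The bound passes to the limit.
-/

open Finset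
open scoped Nat

namespace Finset

variable {α : Type*} [Fintype α] [DecidableEq α]

lemma card_filter_powersetCard_superset_le (T : Finset α) (N : ℕ) :
    #{U ∈ powersetCard N univ | T ⊆ U} ≤ (Fintype.card α - #T).choose (N - #T) := by
  rw [← card_compl, ← card_powersetCard]
  refine card_le_card_of_injOn (· \ T) (fun U hU => ?_) (fun U hU V hV hUV => ?_)
  · rw [mem_coe, mem_filter, mem_powersetCard] at hU
    rw [mem_coe, mem_powersetCard, ← hU.1.2, ← card_sdiff_of_subset hU.2]
    exact ⟨fun x hx => mem_compl.2 (mem_sdiff.1 hx).2, rfl⟩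
  · rw [mem_coe, mem_filter] at hU hV
    rw [← sdiff_union_of_subset hU.2, ← sdiff_union_of_subset hV.2]
    exact congrArg (· ∪ T) hUV

/-- Double count the pairs `T ⊆ U` with `T ∈ C` and `#U = N`. -/
theorem choose_le_card_mul_choose {k N : ℕ} (hkN : k ≤ N) (hN : N ≤ Fintype.card α)
    {C : Finset (Finset α)} (hC : ∀ T ∈ C, #T = k)
    (hcover : ∀ U : Finset α, #U = N → ∃ T ∈ C, T ⊆ U) :
    (Fintype.card α).choose k ≤ #C * N.choose k := by
  have hdc := card_mul_le_card_mul (s := powersetCard N univ) (t := C) (m := 1)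
    (n := (Fintype.card α - k).choose (N - k)) (fun U T => T ⊆ U)
    (fun U hU => by
      obtain ⟨T, hT, hTU⟩ := hcover U (mem_powersetCard.1 hU).2
      exact card_pos.2 ⟨T, mem_filter.2 ⟨hT, hTU⟩⟩)
    (fun T hT => hC T hT ▸ card_filter_powersetCard_superset_le T N)
  rw [card_powersetCard, card_univ, mul_one] at hdc
  have hpos : 0 < (Fintype.card α - k).choose (N - k) := Nat.choose_pos (by omega)
  refine Nat.le_of_mul_le_mul_right ?_ hpos
  calc (Fintype.card α).choose k * (Fintype.card α - k).choose (N - k)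
      = (Fintype.card α).choose N * N.choose k := (Nat.choose_mul hkN).symm
    _ ≤ #C * (Fintype.card α - k).choose (N - k) * N.choose k := Nat.mul_le_mul_right _ hdc
    _ = #C * N.choose k * (Fintype.card α - k).choose (N - k) := by ring

lemma factorial_le_card_embedding_map_eq {k : ℕ} {T : Finset α} (hT : #T = k) :
    k ! ≤ #{s : Fin k ↪ α | univ.map s = T} := by
  set eT : T ≃ Fin k := Fintype.equivFinOfCardEq (by simpa using hT)
  set e : Fin k ↪ α := eT.symm.toEmbedding.trans (Function.Embedding.subtype (· ∈ T))
  have he : univ.map e = T := by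
    ext x
    simp only [mem_map, mem_univ, true_and]
    refine ⟨?_, fun hx => ⟨eT ⟨x, hx⟩, by simp [e]⟩⟩
    rintro ⟨a, rfl⟩
    exact (eT.symm a).2
  calc k ! = #(univ : Finset (Equiv.Perm (Fin k))) := by simp [Fintype.card_perm]
    _ ≤ _ := card_le_card_of_injOn (fun π => π.toEmbedding.trans e)
        (fun π _ => by simpa [← map_map] using he)
        (fun π _ π' _ h => Equiv.ext fun i => e.injective (DFunLike.congr_fun h i))

theorem factorial_mul_card_le_card_embedding {k : ℕ} {C : Finset (Finset α)}
    (hC : ∀ T ∈ C, #T = k) : k ! * #C ≤ #{s : Fin k ↪ α | univ.map s ∈ C} := by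
  rw [card_eq_sum_card_fiberwise (s := {s : Fin k ↪ α | univ.map s ∈ C})
    (f := fun s => univ.map s) (t := C) (fun s hs => (mem_filter.1 hs).2), mul_comm,
    ← smul_eq_mul, ← sum_const]
  refine sum_le_sum fun T hT => (factorial_le_card_embedding_map_eq (hC T hT)).trans ?_
  rw [filter_filter]
  exact card_le_card (monotone_filter_right _ fun s _ hs => ⟨hs ▸ hT, hs⟩)

end Finset

lemma ConvexIndependent.ne_add_add {ι E : Type*} [AddCommGroup E] [Module ℝ E] {X : ι → E}
    (hX : ConvexIndependent ℝ X) {a b c d : ι} (hb : b ∉ ({a, c, d} : Set ι)) {α γ δ : ℝ}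
    (hα : 0 ≤ α) (hγ : 0 ≤ γ) (hδ : 0 ≤ δ) (hsum : α + γ + δ = 1) :
    X b ≠ α • X a + γ • X c + δ • X d := by
  intro heq
  refine hb ((hX.mem_convexHull_iff _ b).1 ?_)
  have hmem := (convex_convexHull ℝ (X '' {a, c, d})).sum_mem (t := Finset.univ)
    (w := ![α, γ, δ]) (z := ![X a, X c, X d])
    (by intro t _; fin_cases t <;> simpa)
    (by simpa [Fin.sum_univ_three] using hsum)
    (by intro t _; fin_cases t <;> exact subset_convexHull ℝ _ (by simp))
  simpa [Fin.sum_univ_three, ← heq] using hmem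

lemma eq_of_alternating {ι : Type*} [LinearOrder ι] {f g : ι → ι → ι → ℝ}
    (hf_cyc : ∀ i j l, f j l i = f i j l) (hf_swap : ∀ i j l, f i l j = -f i j l)
    (hg_cyc : ∀ i j l, g j l i = g i j l) (hg_swap : ∀ i j l, g i l j = -g i j l)
    (h : ∀ i j l, i < j → j < l → f i j l = g i j l) (i j l : ι) : f i j l = g i j l := by
  have hf0 : ∀ i l, f i i l = 0 := fun i l => by linarith [hf_cyc i i l, hf_swap i i l]
  have hg0 : ∀ i l, g i i l = 0 := fun i l => by linarith [hg_cyc i i l, hg_swap i i l]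
  rcases eq_or_ne i j with rfl | hij
  · rw [hf0, hg0]
  rcases eq_or_ne j l with rfl | hjl
  · rw [← hf_cyc, hf0, ← hg_cyc, hg0]
  rcases eq_or_ne i l with rfl | hil
  · rw [hf_cyc, hf0, hg_cyc, hg0]
  rcases hij.lt_or_gt with hij | hij <;> rcases hjl.lt_or_gt with hjl | hjl <;>
    rcases hil.lt_or_gt with hil | hil
  · exact h i j l hij hjl
  · exact absurd (hij.trans hjl) hil.not_gt
  · linarith [hf_swap i l j, hg_swap i l j, h i l j hil hjl]
  · linarith [hf_cyc l i j, hg_cyc l i j, h l i j hil hij]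
  · linarith [hf_swap i j l, hf_cyc j i l, hg_swap i j l, hg_cyc j i l, h j i l hij hil]
  · linarith [hf_cyc i j l, hg_cyc i j l, h j l i hjl hil]
  · exact absurd (hjl.trans hij) hil.not_gt
  · linarith [hf_cyc l i j, hf_swap l i j, hg_cyc l i j, hg_swap l i j, h l j i hjl hij]
namespace Pt

def cross (u v : Pt) : ℝ := u.1 * v.2 - u.2 * v.1

def angle (u : Pt) : ℝ := (Complex.equivRealProd.symm u).arg

lemma cross_eq_mul_sin_angle_sub (u v : Pt) :
    cross u v = ‖Complex.equivRealProd.symm u‖ * ‖Complex.equivRealProd.symm v‖ *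
      Real.sin (angle v - angle u) := by
  set z := Complex.equivRealProd.symm u
  set w := Complex.equivRealProd.symm v
  have h : cross u v = z.re * w.im - z.im * w.re := by simp [cross, z, w]
  rw [h, angle, angle, Real.sin_sub, ← Complex.norm_mul_cos_arg z, ← Complex.norm_mul_sin_arg z,
    ← Complex.norm_mul_cos_arg w, ← Complex.norm_mul_sin_arg w]
  ring

lemma cross_pos_of_angle_lt {u v : Pt} (hu : u ≠ 0) (hv : v ≠ 0) (h : angle u < angle v)
    (h' : angle v < angle u + Real.pi) : 0 < cross u v := by
  rw [cross_eq_mul_sin_angle_sub]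
  have hz : Complex.equivRealProd.symm u ≠ 0 :=
    fun h => hu (by simpa [Prod.mk_zero_zero] using congrArg Complex.equivRealProd h)
  have hw : Complex.equivRealProd.symm v ≠ 0 :=
    fun h => hv (by simpa [Prod.mk_zero_zero] using congrArg Complex.equivRealProd h)
  have := Real.sin_pos_of_pos_of_lt_pi (sub_pos.2 h) (by linarith)
  positivity

lemma cross_eq_zero_of_angle_eq {u v : Pt} (h : angle u = angle v) : cross u v = 0 := by
  rw [cross_eq_mul_sin_angle_sub, h, sub_self, Real.sin_zero, mul_zero]

lemma angle_pos {v : Pt} (h : 0 < v.2 ∨ v.2 = 0 ∧ v.1 < 0) : 0 < angle v := by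
  refine lt_of_le_of_ne ?_ (Ne.symm ?_)
  · rw [angle, Complex.arg_nonneg_iff]
    simp only [Complex.equivRealProd_symm_apply, Complex.add_im, Complex.ofReal_im,
      Complex.mul_im, Complex.ofReal_re, Complex.I_im, Complex.I_re]
    rcases h with h | ⟨h, -⟩ <;> linarith
  · rw [angle, Ne, Complex.arg_eq_zero_iff]
    simp only [Complex.equivRealProd_symm_apply, Complex.add_im, Complex.ofReal_im,
      Complex.mul_im, Complex.ofReal_re, Complex.I_im, Complex.I_re, Complex.add_re,
      Complex.mul_re]
    rintro ⟨h₁, h₂⟩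
    rcases h with h | ⟨-, h⟩ <;> linarith

lemma angle_le_pi (v : Pt) : angle v ≤ Real.pi := Complex.arg_le_pi _

lemma angle_zero : angle 0 = 0 := by simp [angle]

/-- Cramer's rule: `v = α • u + γ • w` with `α + γ > 1` unless `v` lies in the triangle
`0, u, w`. -/
lemma cross_sub_sub_pos {u v w : Pt} (huv : 0 < cross u v) (hvw : 0 < cross v w)
    (huw : 0 < cross u w)
    (hv : ∀ α γ : ℝ, 0 < α → 0 < γ → α + γ ≤ 1 → v ≠ α • u + γ • w) :
    0 < cross (v - u) (w - u) := by
  set α := cross v w / cross u w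
  set γ := cross u v / cross u w
  have hvuw : v = α • u + γ • w := by
    have hne : cross u w ≠ 0 := huw.ne'
    ext <;> simp only [Prod.fst_add, Prod.snd_add, Prod.smul_fst, Prod.smul_snd, smul_eq_mul,
      α, γ] <;> field_simp <;> simp only [cross] <;> ring
  have hαγ : 1 < α + γ := by
    by_contra! h
    exact hv α γ (div_pos hvw huw) (div_pos huv huw) h hvuw
  have : cross (v - u) (w - u) = (α + γ - 1) * cross u w := by
    rw [hvuw]; simp only [cross, Prod.fst_add, Prod.snd_add, Prod.smul_fst, Prod.smul_snd,
      Prod.fst_sub, Prod.snd_sub, smul_eq_mul]; ring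
  rw [this]
  exact mul_pos (by linarith) huw

/-- The lowest point (rightmost among the lowest ones) sees all others at angles in `(0, π]`. -/
lemma exists_angle_sub_pos {ι : Type*} [Finite ι] [Nonempty ι] {X : ι → Pt}
    (hX : Function.Injective X) : ∃ i₀, ∀ i ≠ i₀, 0 < angle (X i - X i₀) := by
  obtain ⟨i₀, hi₀⟩ := Finite.exists_min fun i => toLex ((X i).2, -(X i).1)
  refine ⟨i₀, fun i hi => angle_pos ?_⟩
  have hne : (X i).1 ≠ (X i₀).1 ∨ (X i).2 ≠ (X i₀).2 := by
    by_contra! h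
    exact hi (hX (Prod.ext h.1 h.2))
  have hle := hi₀ i
  simp only [Prod.Lex.toLex_le_toLex, neg_le_neg_iff] at hle
  simp only [Prod.fst_sub, Prod.snd_sub, sub_pos, sub_eq_zero, sub_neg]
  rcases hle with h | ⟨h₁, h₂⟩
  · exact Or.inl h
  · exact Or.inr ⟨h₁.symm, lt_of_le_of_ne h₂ (hne.resolve_right (not_not.2 h₁.symm))⟩

end Pt

open Pt

lemma chi_eq_sign_cross (p q r : Pt) : chi p q r = Real.sign (cross (q - p) (r - p)) := rfl

lemma chi_cyc (p q r : Pt) : chi q r p = chi p q r := by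
  unfold chi; congr 1; ring

lemma chi_swap (p q r : Pt) : chi p r q = -chi p q r := by
  unfold chi; rw [← Real.sign_neg]; congr 1; ring

lemma ConvexPosSet.convexIndependent {ι : Type*} {X : ι → Pt} (h : ConvexPosSet (Set.range X))
    (hX : Function.Injective X) : ConvexIndependent ℝ X := by
  rw [convexIndependent_iff_notMem_convexHull_sdiff]
  intro i s hi
  have hext := (convex_convexHull ℝ _).mem_extremePoints_iff_mem_sdiff_convexHull_sdiff.1
    (h.2 _ ⟨i, rfl⟩)
  refine hext.2 (convexHull_mono ?_ hi)
  rintro _ ⟨j, hj, rfl⟩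
  exact ⟨subset_convexHull ℝ _ ⟨j, rfl⟩, fun hji => hj.2 (hX hji)⟩

lemma ConvexPosSet.injective_angle_sub {ι : Type*} {X : ι → Pt} (hc : ConvexPosSet (Set.range X))
    (hX : Function.Injective X) {i₀ : ι} (hi₀ : ∀ i ≠ i₀, 0 < angle (X i - X i₀)) :
    Function.Injective fun i => angle (X i - X i₀) := by
  intro a b (hab : angle (X a - X i₀) = angle (X b - X i₀))
  by_contra hne
  wlog ha : a ≠ i₀ generalizing a b
  · exact this hab.symm (Ne.symm hne) (fun hb => hne ((not_not.1 ha).trans hb.symm))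
  rcases eq_or_ne b i₀ with rfl | hb
  · rw [sub_self, angle_zero] at hab
    exact (hi₀ a ha).ne' hab
  have hgp := hc.1 (X i₀) (X a) (X b) ⟨i₀, rfl⟩ ⟨a, rfl⟩ ⟨b, rfl⟩
    (hX.ne (Ne.symm ha)) (hX.ne hne) (hX.ne (Ne.symm hb))
  rw [chi_eq_sign_cross, cross_eq_zero_of_angle_eq hab, Real.sign_zero] at hgp
  exact hgp rfl

theorem ConvexPosSet.exists_perm_chi_eq_one {k : ℕ} {X : Fin k → Pt}
    (hc : ConvexPosSet (Set.range X)) (hX : Function.Injective X) :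
    ∃ σ : Equiv.Perm (Fin k), ∀ i j l, i < j → j < l → chi (X (σ i)) (X (σ j)) (X (σ l)) = 1 := by
  cases isEmpty_or_nonempty (Fin k)
  · exact ⟨1, fun i => isEmptyElim i⟩
  obtain ⟨i₀, hi₀⟩ := exists_angle_sub_pos hX
  set u : Fin k → Pt := fun i => X i - X i₀
  set key : Fin k → ℝ := fun i => angle (u i)
  have hu : ∀ i ≠ i₀, u i ≠ 0 := fun i hi h => hi (hX (sub_eq_zero.1 h))
  have hkey₀ : key i₀ = 0 := by simp [key, u, angle_zero]
  have hkey_min : ∀ i, key i₀ ≤ key i := fun i => by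
    rcases eq_or_ne i i₀ with rfl | hi
    · rfl
    · exact hkey₀ ▸ (hi₀ i hi).le
  have hcross : ∀ a b, a ≠ i₀ → key a < key b → 0 < cross (u a) (u b) := by
    intro a b ha hab
    have hb : b ≠ i₀ := by rintro rfl; linarith [hkey_min a]
    exact cross_pos_of_angle_lt (hu a ha) (hu b hb) hab
      (by linarith [hi₀ a ha, angle_le_pi (u b)])
  obtain ⟨σ, hσ⟩ : ∃ σ : Equiv.Perm (Fin k), StrictMono (key ∘ σ) :=
    ⟨_, (Tuple.monotone_sort key).strictMono_of_injective
      ((hc.injective_angle_sub hX hi₀).comp (Equiv.injective _))⟩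
  refine ⟨σ, fun i j l hij hjl => ?_⟩
  have hab : key (σ i) < key (σ j) := hσ hij
  have hbc : key (σ j) < key (σ l) := hσ hjl
  have hb : σ j ≠ i₀ := fun hb => (hkey_min (σ i)).not_gt (hb ▸ hab)
  rw [chi_eq_sign_cross]
  apply Real.sign_of_pos
  by_cases ha : σ i = i₀
  · rw [ha]
    exact hcross _ _ hb hbc
  have hsub : ∀ x, X (σ x) - X (σ i) = u (σ x) - u (σ i) := fun x => by
    simp only [u, sub_sub_sub_cancel_right]
  rw [hsub, hsub]
  refine cross_sub_sub_pos (hcross _ _ ha hab) (hcross _ _ hb hbc)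
    (hcross _ _ ha (hab.trans hbc)) fun α γ hα hγ hαγ heq => ?_
  have hb' : σ j ∉ ({σ i, σ l, i₀} : Set (Fin k)) := by
    simp only [Set.mem_insert_iff, Set.mem_singleton_iff, σ.injective.eq_iff, not_or]
    exact ⟨hij.ne', hjl.ne, hb⟩
  refine (hc.convexIndependent hX).ne_add_add hb' hα.le hγ.le
    (δ := 1 - α - γ) (by linarith) (by ring) ?_
  simp only [u] at heq
  linear_combination (norm := module) heq

theorem sameOT_of_convexPosSet {k : ℕ} {P Q : Fin k → Pt} (hP : Function.Injective P)
    (hQ : Function.Injective Q) (hPc : ConvexPosSet (Set.range P))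
    (hQc : ConvexPosSet (Set.range Q)) : sameOT P Q := by
  obtain ⟨σ, hσ⟩ := hPc.exists_perm_chi_eq_one hP
  obtain ⟨τ, hτ⟩ := hQc.exists_perm_chi_eq_one hQ
  refine ⟨σ.symm.trans τ, fun i j l => ?_⟩
  have := eq_of_alternating (f := fun i j l => chi (P (σ i)) (P (σ j)) (P (σ l)))
    (g := fun i j l => chi (Q (τ i)) (Q (τ j)) (Q (τ l)))
    (fun _ _ _ => chi_cyc ..) (fun _ _ _ => chi_swap ..)
    (fun _ _ _ => chi_cyc ..) (fun _ _ _ => chi_swap ..)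
    (fun i j l hij hjl => (hσ i j l hij hjl).trans (hτ i j l hij hjl).symm)
    (σ.symm i) (σ.symm j) (σ.symm l)
  simpa using this

lemma InGenPos.comp_embedding {n m : ℕ} {P : Fin n → Pt} (hP : InGenPos P) (f : Fin m ↪ Fin n) :
    InGenPos (P ∘ f) :=
  ⟨hP.1.comp f.injective, fun _ _ _ hij hjl hil =>
    hP.2 _ _ _ (f.injective.ne hij) (f.injective.ne hjl) (f.injective.ne hil)⟩

lemma exists_subset_convexPosSet {k N n : ℕ}
    (hES : ∀ P : Fin N → Pt, InGenPos P →
      ∃ s : Finset (Fin N), s.card = k ∧ ConvexPosSet (P '' ↑s))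
    {Q : Fin n → Pt} (hQ : InGenPos Q) {U : Finset (Fin n)} (hU : #U = N) :
    ∃ T ⊆ U, #T = k ∧ ConvexPosSet (Q '' T) := by
  set f := (U.orderEmbOfFin hU).toEmbedding
  obtain ⟨s, hs, hsc⟩ := hES (Q ∘ f) (hQ.comp_embedding f)
  refine ⟨s.map f, fun x hx => ?_, by rw [card_map, hs], ?_⟩
  · obtain ⟨i, -, rfl⟩ := mem_map.1 hx
    exact U.orderEmbOfFin_mem hU i
  · rwa [coe_map, Set.image_image]

theorem one_div_choose_le_density {k N n : ℕ} (hkN : k ≤ N) (hNn : N ≤ n)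
    (hES : ∀ P : Fin N → Pt, InGenPos P →
      ∃ s : Finset (Fin N), s.card = k ∧ ConvexPosSet (P '' ↑s))
    (ω : PtOrderType k) (ω' : PtOrderType n)
    (hω : ConvexPosSet (Set.range (realization ω))) :
    1 / (N.choose k : ℝ) ≤ density ω ω' := by
  classical
  set R := realization ω
  set Q := realization ω'
  have hR : InGenPos R := (Quotient.out ω).2
  have hQ : InGenPos Q := (Quotient.out ω').2
  set C : Finset (Finset (Fin n)) := {T ∈ powersetCard k univ | ConvexPosSet (Q '' T)}
  have hC : ∀ T ∈ C, #T = k := fun T hT => (mem_powersetCard.1 (mem_filter.1 hT).1).2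
  have hcount : n.choose k ≤ #C * N.choose k := by
    simpa using choose_le_card_mul_choose hkN (by simpa using hNn) hC fun U hU => by
      obtain ⟨T, hTU, hT, hTc⟩ := exists_subset_convexPosSet hES hQ hU
      exact ⟨T, mem_filter.2 ⟨mem_powersetCard.2 ⟨subset_univ T, hT⟩, hTc⟩, hTU⟩
  have hgood : k ! * #C ≤ Nat.card {s : Fin k ↪ Fin n // sameOT R fun i => Q (s i)} := by
    rw [Nat.card_eq_fintype_card, Fintype.card_subtype]
    refine (factorial_mul_card_le_card_embedding hC).trans
      (card_le_card (monotone_filter_right _ fun s _ hs => ?_))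
    have hrange : Set.range (fun i => Q (s i)) = Q '' ↑(univ.map s) := by
      rw [coe_map, coe_univ, Set.image_univ, ← Set.range_comp]; rfl
    exact sameOT_of_convexPosSet hR.1 (hQ.1.comp s.injective) hω
      (hrange ▸ (mem_filter.1 hs).2)
  have hcard : Nat.card (Fin k ↪ Fin n) = k ! * n.choose k := by
    rw [Nat.card_eq_fintype_card, Fintype.card_embedding_eq, Fintype.card_fin, Fintype.card_fin,
      Nat.descFactorial_eq_factorial_mul_choose]
  have hmain : k ! * n.choose k ≤
      Nat.card {s : Fin k ↪ Fin n // sameOT R fun i => Q (s i)} * N.choose k :=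
    calc k ! * n.choose k ≤ k ! * (#C * N.choose k) := Nat.mul_le_mul_left _ hcount
      _ = k ! * #C * N.choose k := (mul_assoc ..).symm
      _ ≤ _ := Nat.mul_le_mul_right _ hgood
  have hpos : 0 < N.choose k := Nat.choose_pos hkN
  have hpos' : 0 < n.choose k := Nat.choose_pos (hkN.trans hNn)
  rw [density, hcard, div_le_div_iff₀ (by positivity) (by positivity), one_mul]
  exact_mod_cast hmain

theorem stmt_18_general (k N : ℕ) (hkN : k ≤ N)
    (hES : ∀ P : Fin N → Pt, InGenPos P →
      ∃ s : Finset (Fin N), s.card = k ∧ ConvexPosSet (P '' ↑s))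
    (ℓ : OT → ℝ) (hℓ : IsOTLimit ℓ) :
    ∀ ω : PtOrderType k, ConvexPosSet (Set.range (realization ω)) →
      1 / (N.choose k : ℝ) ≤ ℓ ⟨k, ω⟩ := by
  intro ω hω
  obtain ⟨ωs, hsize, hlim⟩ := hℓ
  refine ge_of_tendsto (hlim ⟨k, ω⟩) ?_
  filter_upwards [hsize.eventually_ge_atTop N] with n hn
  exact one_div_choose_le_density hkN hn hES ω (ωs n).2 hω

theorem stmt_18 (k N : ℕ) (hk : 4 ≤ k) (hkN : k ≤ N)
    (hES : ∀ P : Fin N → Pt, InGenPos P →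
      ∃ s : Finset (Fin N), s.card = k ∧ ConvexPosSet (P '' ↑s))
    (ℓ : OT → ℝ) (hℓ : IsOTLimit ℓ) :
    ∀ ω : PtOrderType k, ConvexPosSet (Set.range (realization ω)) →
      1 / (N.choose k : ℝ) ≤ ℓ ⟨k, ω⟩ :=
  stmt_18_general k N hkN hES ℓ hℓ
end
end
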